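/- Range characterization: if in addition a₁, …, a_i are linearly independent, then for each 1 ≤ i ≤ m the null space of A_i = (a₁, …, a_i)ᵀ, i.e. {x ∈ ℝⁿ : a_jᵀ x = 0 for all j = 1, …, i}, equals the range of H_{i+1}ᵀ, i.e. {H_{i+1}ᵀ q : q ∈ ℝⁿ}. -/

import Mathlib

/-!
Each Abaffian update `H ↦ H - (w ⬝ᵥ H u)⁻¹ (H u)(wᵀ H)` kills `u` and keeps every vector already
killed, so `H_{i+1} a_j = 0` for `j ≤ i`; this gives `range H_{i+1}ᵀ ⊆ null A_i`. Conversely the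
same update leaves `qᵀ H` unchanged whenever `qᵀ H u = 0`. Writing `x ∈ null A_i` as `qᵀ H₁` (as
`H₁` is invertible), the conditions `qᵀ H_j a_j = a_jᵀ x = 0` hold successively, so
`x = qᵀ H_{i+1}`.
-/

open Matrix

variable {K ι : Type*} [Field K] [Fintype ι]

def abaffianUpdate (H : Matrix ι ι K) (u w : ι → K) : Matrix ι ι K :=
  H - (w ⬝ᵥ H *ᵥ u)⁻¹ • vecMulVec (H *ᵥ u) (w ᵥ* H)

lemma abaffianUpdate_mulVec (H : Matrix ι ι K) (u w x : ι → K) :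
    abaffianUpdate H u w *ᵥ x = H *ᵥ x - ((w ⬝ᵥ H *ᵥ u)⁻¹ * (w ⬝ᵥ H *ᵥ x)) • H *ᵥ u := by
  rw [abaffianUpdate, sub_mulVec, smul_mulVec, vecMulVec_mulVec, ← dotProduct_mulVec,
    op_smul_eq_smul, smul_smul]

lemma vecMul_abaffianUpdate (H : Matrix ι ι K) (u w q : ι → K) :
    q ᵥ* abaffianUpdate H u w = q ᵥ* H - ((w ⬝ᵥ H *ᵥ u)⁻¹ * ((q ᵥ* H) ⬝ᵥ u)) • w ᵥ* H := by
  rw [abaffianUpdate, vecMul_sub, vecMul_smul, vecMul_vecMulVec, dotProduct_mulVec q,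
    smul_smul]

lemma abaffianUpdate_mulVec_self {H : Matrix ι ι K} {u w : ι → K} (hw : w ⬝ᵥ H *ᵥ u ≠ 0) :
    abaffianUpdate H u w *ᵥ u = 0 := by
  rw [abaffianUpdate_mulVec, inv_mul_cancel₀ hw, one_smul, sub_self]

lemma abaffianUpdate_mulVec_of_mulVec_eq_zero (H : Matrix ι ι K) (u w : ι → K) {x : ι → K}
    (hx : H *ᵥ x = 0) : abaffianUpdate H u w *ᵥ x = 0 := by
  rw [abaffianUpdate_mulVec, hx, dotProduct_zero, mul_zero, zero_smul, sub_zero]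

lemma vecMul_abaffianUpdate_of_dotProduct_eq_zero (H : Matrix ι ι K) (u w : ι → K) {q : ι → K}
    (hq : (q ᵥ* H) ⬝ᵥ u = 0) : q ᵥ* abaffianUpdate H u w = q ᵥ* H := by
  rw [vecMul_abaffianUpdate, hq, mul_zero, zero_smul, sub_zero]

section Sequence

variable {m : ℕ} {a w : ℕ → ι → K} {H : ℕ → Matrix ι ι K}
  (hrec : ∀ i, 1 ≤ i → i ≤ m → H (i + 1) = abaffianUpdate (H i) (a i) (w i))
include hrec

lemma abaffian_mulVec_eq_zero (hw : ∀ i, 1 ≤ i → i ≤ m → w i ⬝ᵥ H i *ᵥ a i ≠ 0) :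
    ∀ i ≤ m, ∀ j, 1 ≤ j → j ≤ i → H (i + 1) *ᵥ a j = 0 := by
  intro i
  induction i with
  | zero => intro _ j hj₁ hj; omega
  | succ k ih =>
    intro hk j hj₁ hj
    rw [hrec (k + 1) (by omega) hk]
    rcases Nat.lt_or_ge j (k + 1) with hlt | hge
    · exact abaffianUpdate_mulVec_of_mulVec_eq_zero _ _ _ (ih (by omega) j hj₁ (by omega))
    · obtain rfl : j = k + 1 := by omega
      exact abaffianUpdate_mulVec_self (hw _ hj₁ hk)

lemma vecMul_abaffian_eq_of_dotProduct_eq_zero (q : ι → K) :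
    ∀ i ≤ m, (∀ j, 1 ≤ j → j ≤ i → (q ᵥ* H 1) ⬝ᵥ a j = 0) → q ᵥ* H (i + 1) = q ᵥ* H 1 := by
  intro i
  induction i with
  | zero => intro _ _; rfl
  | succ k ih =>
    intro hk hq
    have hk' : q ᵥ* H (k + 1) = q ᵥ* H 1 :=
      ih (by omega) fun j hj₁ hj => hq j hj₁ (by omega)
    have hdot : (q ᵥ* H (k + 1)) ⬝ᵥ a (k + 1) = 0 := hk' ▸ hq (k + 1) (by omega) le_rfl
    rw [hrec (k + 1) (by omega) hk, vecMul_abaffianUpdate_of_dotProduct_eq_zero _ _ _ hdot, hk']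

end Sequence

theorem abs_range_characterization_general
    (m n : ℕ)
    (a w : ℕ → (Fin n → ℝ))
    (H : ℕ → Matrix (Fin n) (Fin n) ℝ)
    (hH1 : IsUnit (H 1))
    (hw : ∀ i, 1 ≤ i → i ≤ m → w i ⬝ᵥ (H i).mulVec (a i) ≠ 0)
    (hrec : ∀ i, 1 ≤ i → i ≤ m →
      H (i + 1) = H i - (w i ⬝ᵥ (H i).mulVec (a i))⁻¹ •
        Matrix.vecMulVec ((H i).mulVec (a i)) (Matrix.vecMul (w i) (H i))) :
    ∀ i, 1 ≤ i → i ≤ m →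
      LinearIndependent ℝ (fun j : Fin i => a (j.1 + 1)) →
      {x : Fin n → ℝ | ∀ j, 1 ≤ j → j ≤ i → a j ⬝ᵥ x = 0} =
        Set.range (Matrix.mulVec (H (i + 1))ᵀ) := by
  intro i _ hi _
  ext x
  simp only [Set.mem_ofPred_eq, Set.mem_range, mulVec_transpose]
  constructor
  · intro hx
    obtain ⟨q, rfl⟩ := vecMul_surjective_iff_isUnit.mpr hH1 x
    refine ⟨q, vecMul_abaffian_eq_of_dotProduct_eq_zero hrec q i hi fun j hj₁ hj => ?_⟩
    rw [dotProduct_comm]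
    exact hx j hj₁ hj
  · rintro ⟨q, rfl⟩ j hj₁ hj
    rw [dotProduct_comm, ← dotProduct_mulVec,
      abaffian_mulVec_eq_zero hrec hw i hi j hj₁ hj, dotProduct_zero]

theorem abs_range_characterization
    (m n : ℕ) (hm : 0 < m) (hmn : m ≤ n)
    (a z w p : ℕ → (Fin n → ℝ))
    (H : ℕ → Matrix (Fin n) (Fin n) ℝ)
    (hH1 : IsUnit (H 1))
    (hz : ∀ i, 1 ≤ i → i ≤ m → z i ⬝ᵥ (H i).mulVec (a i) ≠ 0)
    (hw : ∀ i, 1 ≤ i → i ≤ m → w i ⬝ᵥ (H i).mulVec (a i) ≠ 0)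
    (hrec : ∀ i, 1 ≤ i → i ≤ m →
      H (i + 1) = H i - (w i ⬝ᵥ (H i).mulVec (a i))⁻¹ •
        Matrix.vecMulVec ((H i).mulVec (a i)) (Matrix.vecMul (w i) (H i)))
    (hp : ∀ i, 1 ≤ i → i ≤ m → p i = Matrix.mulVec (H i)ᵀ (z i)) :
    ∀ i, 1 ≤ i → i ≤ m →
      LinearIndependent ℝ (fun j : Fin i => a (j.1 + 1)) →
      {x : Fin n → ℝ | ∀ j, 1 ≤ j → j ≤ i → a j ⬝ᵥ x = 0} =
        Set.range (Matrix.mulVec (H (i + 1))ᵀ) :=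
  abs_range_characterization_general m n a w H hH1 hw hrec
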